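/- Let l = 2 and let S = (β^1, β^2) be a standard 2-symbol with a common entry x in both rows, i.e. β^1_{j₁} = β^2_{j₂} = x for some j₁, j₂. Then the Leclerc–Miyachi injection Ψ : β^2 → β^1 satisfies Ψ(x) = x; consequently x is not part of any pair of S, and the pairs of S coincide (as unordered pairs of values) with the pairs of the symbol S[x] obtained by deleting the entry x from both rows. -/
import Mathlib


/-- `β` is a β-number sequence of charge `s`: strictly increasing for indices `≤ s`,
and equal to the identity for sufficiently small indices. -/
def RowOK (s : ℤ) (β : ℤ → ℤ) : Prop :=
  (∀ j : ℤ, j ≤ s → β (j - 1) < β j) ∧ ∃ N : ℤ, ∀ j : ℤ, j ≤ N → β j = j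

/-- The size of a row of charge `s`: `∑_{j ≤ s} (β_j - j)`. -/
noncomputable def rowSize (s : ℤ) (β : ℤ → ℤ) : ℕ :=
  ∑' k : ℕ, (β (s - k) - (s - k)).toNat

/-- The size of an `l`-symbol (rows indexed by `1,…,l`, row `i` of charge `v i`). -/
noncomputable def symSize (l : ℕ) (v : ℕ → ℤ) (β : ℕ → ℤ → ℤ) : ℕ :=
  ∑ i ∈ Finset.Icc 1 l, rowSize (v i) (β i)

/-- A symbol is standard if `β^i_j ≤ β^{i+1}_j` for all relevant `i`, `j`. -/
def Standard (l : ℕ) (v : ℕ → ℤ) (β : ℕ → ℤ → ℤ) : Prop :=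
  ∀ i : ℕ, 1 ≤ i → i < l → ∀ j : ℤ, j ≤ v (i + 1) → β i j ≤ β (i + 1) j

/-- The set of entries of row `i` of a symbol. -/
def Row (v : ℕ → ℤ) (β : ℕ → ℤ → ℤ) (i : ℕ) : Set ℤ := {x | ∃ j ≤ v i, β i j = x}

/-- `Ψ : B2 → B1` is the Leclerc–Miyachi greedy injection: each entry `y` of `B2`
(scanned in increasing order) is matched to the largest entry of `B1` not exceeding `y`
which has not been used for a smaller entry of `B2`. -/
def IsLMset (B1 B2 : Set ℤ) (Ψ : ℤ → ℤ) : Prop :=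
  ∀ y ∈ B2, IsGreatest {z | z ∈ B1 ∧ z ≤ y ∧ ∀ y' ∈ B2, y' < y → Ψ y' ≠ z} (Ψ y)

lemma lm_le {B1 B2 : Set ℤ} {Ψ : ℤ → ℤ} (h : IsLMset B1 B2 Ψ) {y : ℤ} (hy : y ∈ B2) :
    Ψ y ≤ y :=
  (h y hy).1.2.1

lemma lm_fix {B1 B2 : Set ℤ} {Ψ : ℤ → ℤ} (h : IsLMset B1 B2 Ψ) {y : ℤ}
    (h1 : y ∈ B1) (h2 : y ∈ B2) : Ψ y = y :=
  le_antisymm (lm_le h h2)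
    ((h y h2).2 ⟨h1, le_refl y, fun y' hy' hlt => ((lm_le h hy').trans_lt hlt).ne⟩)

/-- If `x` is a common entry of the two rows of a standard 2-symbol, then the
Leclerc–Miyachi injection fixes `x` (so `x` is not part of any pair), and the
injection of the symbol `S[x]` obtained by deleting `x` from both rows agrees with
`Ψ` on every other entry (so the pairs of `S` and of `S[x]` coincide). -/
theorem common_entry_fixed
    (v1 v2 : ℤ) (hv : v2 ≤ v1)
    (β1 β2 : ℤ → ℤ) (h1 : RowOK v1 β1) (h2 : RowOK v2 β2)
    (hstd : ∀ j : ℤ, j ≤ v2 → β1 j ≤ β2 j)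
    (x : ℤ) (hx1 : ∃ j ≤ v1, β1 j = x) (hx2 : ∃ j ≤ v2, β2 j = x)
    (Ψ : ℤ → ℤ)
    (hΨ : IsLMset {y | ∃ j ≤ v1, β1 j = y} {y | ∃ j ≤ v2, β2 j = y} Ψ) :
    Ψ x = x ∧
      ∀ Ψ' : ℤ → ℤ,
        IsLMset ({y | ∃ j ≤ v1, β1 j = y} \ {x}) ({y | ∃ j ≤ v2, β2 j = y} \ {x}) Ψ' →
        ∀ y, (∃ j ≤ v2, β2 j = y) → y ≠ x → Ψ' y = Ψ y := by

  obtain ⟨hs1, N1, hN1⟩ := h1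
  obtain ⟨hs2, N2, hN2⟩ := h2
  have hΨx : Ψ x = x := lm_fix hΨ hx1 hx2
  refine ⟨hΨx, ?_⟩
  intro Ψ' hΨ'
  set N0 : ℤ := min (min N1 N2) (min v1 v2) with hN0
  have key : ∀ n : ℕ, ∀ y : ℤ, y ≤ N0 + n → (∃ j ≤ v2, β2 j = y) → y ≠ x → Ψ' y = Ψ y := by
    intro n
    induction n with
    | zero =>
      intro y hyN hy hne
      have hb : y ≤ N1 ∧ y ≤ v1 := by push_cast at hyN; omega
      have hyB1 : ∃ j ≤ v1, β1 j = y := ⟨y, hb.2, hN1 y hb.1⟩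
      rw [lm_fix hΨ hyB1 hy, lm_fix hΨ' ⟨hyB1, by simpa using hne⟩ ⟨hy, by simpa using hne⟩]
    | succ n ih =>
      intro y hyN hy hne
      by_cases hle : y ≤ N0 + n
      · exact ih y hle hy hne
      · have hm := hΨ y hy
        have hm' := hΨ' y ⟨hy, by simpa using hne⟩
        have hAA : {z | z ∈ ({y | ∃ j ≤ v1, β1 j = y} \ {x}) ∧ z ≤ y ∧
              ∀ y' ∈ ({y | ∃ j ≤ v2, β2 j = y} \ {x}), y' < y → Ψ' y' ≠ z}
            = {z | z ∈ {y | ∃ j ≤ v1, β1 j = y} ∧ z ≤ y ∧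
              ∀ y' ∈ {y | ∃ j ≤ v2, β2 j = y}, y' < y → Ψ y' ≠ z} := by
          ext z
          constructor
          · rintro ⟨⟨hzB, hzx⟩, hzy, hz⟩
            refine ⟨hzB, hzy, ?_⟩
            intro y' hy' hlt
            by_cases hyx : y' = x
            · subst hyx
              rw [hΨx]
              exact fun h => hzx (by simp [h])
            · rw [← ih y' (by push_cast at hyN ⊢; omega) hy' hyx]
              exact hz y' ⟨hy', by simpa using hyx⟩ hlt
          · rintro ⟨hzB, hzy, hz⟩
            have hzx : z ≠ x := by
              rcases lt_or_ge x y with hlt | hge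
              · intro h
                exact hz x hx2 hlt (by rw [hΨx, h])
              · omega
            refine ⟨⟨hzB, by simpa using hzx⟩, hzy, ?_⟩
            intro y' hy'd hlt
            rw [ih y' (by push_cast at hyN ⊢; omega) hy'd.1 (by simpa using hy'd.2)]
            exact hz y' hy'd.1 hlt
        rw [hAA] at hm'
        exact hm'.unique hm
  intro y hy hyne
  exact key (y - N0).toNat y (by omega) hy hyne
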